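/- Subadditivity/strict scaling inequality: Let 3/2<p<3, p<q<p+2p^2/3 and suppose i(c) < 0 for some c>0. Then for any θ>1, i(θc) < θ^p i(c). Consequently, for any 0<α<c, i(c) < i(α) + i((c^p - α^p)^{1/p}). -/

import Mathlib

/-!
Dilations `u ↦ l · u(μ ·)` multiply the mass and the three terms of the energy by explicit powers
of `l` and `μ`. Raising the mass by `θ > 1` with `μ = θ^{-p/3}` multiplies the `L^q` term by exactly
`θ^p`, the quadratic gradient term by `θ^{p - p²/3} < θ^p` and the quartic one by
`θ^{2p - 2p²/3} ≤ θ^p` (as `p ≥ 3/2`), so `i(θs) ≤ θ^p i(s)` with a loss proportional to the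
gradient of a near-minimiser. When `i(s) < 0` that gradient is bounded away from `0`, which makes
the inequality strict. For `α^p + β^p = c^p` it gives `α^p i(c) < c^p i(α)` and
`β^p i(c) < c^p i(β)` (trivially where `i` vanishes), and adding them yields the subadditivity.
-/

open MeasureTheory Real Set Filter

noncomputable section

abbrev E3 := EuclideanSpace ℝ (Fin 3)

def gradPow (p : ℝ) (u : E3 → ℝ) : ℝ := ∫ x : E3, ‖fderiv ℝ u x‖ ^ p
def lpPow (s : ℝ) (u : E3 → ℝ) : ℝ := ∫ x : E3, |u x| ^ s
def Wmem (p : ℝ) (u : E3 → ℝ) : Prop :=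
  Differentiable ℝ u ∧ MeasureTheory.Integrable (fun x : E3 => |u x| ^ p) ∧
    MeasureTheory.Integrable (fun x : E3 => ‖fderiv ℝ u x‖ ^ p)
def Ifun (a b p q : ℝ) (u : E3 → ℝ) : ℝ :=
  a / p * gradPow p u + b / (2 * p) * (gradPow p u) ^ 2 - 1 / q * lpPow q u
def Sset (p c : ℝ) : Set (E3 → ℝ) := {u | Wmem p u ∧ lpPow p u = c ^ p}
def ifun (a b p q c : ℝ) : ℝ := sInf (Ifun a b p q '' Sset p c)

lemma neg_sq_div_le_mul_add_mul_sq {B : ℝ} (hB : 0 < B) (x y : ℝ) :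
    -(x ^ 2 / (4 * B)) ≤ x * y + B * y ^ 2 := by
  rw [neg_le_iff_add_nonneg', div_add' _ _ _ (by positivity)]
  exact div_nonneg (by nlinarith [sq_nonneg (2 * B * y + x)]) (by positivity)

lemma min_le_of_le_mul_add_mul_sq {m D₁ D₂ x : ℝ} (hD₁ : 0 ≤ D₁) (hD₂ : 0 ≤ D₂)
    (hx : 0 ≤ x) (h : m ≤ D₁ * x + D₂ * x ^ 2) : min 1 (m / (D₁ + D₂ + 1)) ≤ x := by
  by_contra! hlt
  have hx1 : x < 1 := hlt.trans_le (min_le_left _ _)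
  have hxm : x * (D₁ + D₂ + 1) < m :=
    (lt_div_iff₀ (by positivity)).mp (hlt.trans_le (min_le_right _ _))
  nlinarith [mul_le_mul_of_nonneg_left (pow_le_of_le_one hx hx1.le two_ne_zero) hD₂]

def dilate (l m : ℝ) (u : E3 → ℝ) : E3 → ℝ := fun x => l * u (m • x)

section Dilation

variable {u : E3 → ℝ} {l m : ℝ}

lemma fderiv_dilate (x : E3) : fderiv ℝ (dilate l m u) x = (l * m) • fderiv ℝ u (m • x) := by
  have h : dilate l m u = l • fun y => u (m • y) := rfl
  rw [h, fderiv_const_smul_field, Pi.smul_apply, fderiv_comp_smul, smul_smul]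

lemma abs_dilate_rpow (hl : 0 ≤ l) (s : ℝ) (x : E3) :
    |dilate l m u x| ^ s = l ^ s * |u (m • x)| ^ s := by
  rw [dilate, abs_mul, abs_of_nonneg hl, mul_rpow hl (abs_nonneg _)]

lemma norm_fderiv_dilate_rpow (hlm : 0 ≤ l * m) (p : ℝ) (x : E3) :
    ‖fderiv ℝ (dilate l m u) x‖ ^ p = (l * m) ^ p * ‖fderiv ℝ u (m • x)‖ ^ p := by
  rw [fderiv_dilate, norm_smul, norm_of_nonneg hlm, mul_rpow hlm (norm_nonneg _)]

lemma integral_comp_smul_E3 (f : E3 → ℝ) (hm : 0 ≤ m) :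
    ∫ x : E3, f (m • x) = (m ^ 3)⁻¹ * ∫ x : E3, f x := by
  rw [Measure.integral_comp_smul_of_nonneg volume f m (hR := hm), finrank_euclideanSpace_fin,
    smul_eq_mul]

lemma lpPow_dilate (hl : 0 ≤ l) (hm : 0 ≤ m) (s : ℝ) :
    lpPow s (dilate l m u) = l ^ s * (m ^ 3)⁻¹ * lpPow s u := by
  simp only [lpPow, abs_dilate_rpow hl, integral_const_mul,
    integral_comp_smul_E3 (fun y => |u y| ^ s) hm, mul_assoc]

lemma gradPow_dilate (hl : 0 ≤ l) (hm : 0 ≤ m) (p : ℝ) :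
    gradPow p (dilate l m u) = (l * m) ^ p * (m ^ 3)⁻¹ * gradPow p u := by
  simp only [gradPow, norm_fderiv_dilate_rpow (mul_nonneg hl hm), integral_const_mul,
    integral_comp_smul_E3 (fun y => ‖fderiv ℝ u y‖ ^ p) hm, mul_assoc]

lemma Wmem.dilate {p : ℝ} (hu : Wmem p u) (hl : 0 ≤ l) (hm : 0 < m) :
    Wmem p (dilate l m u) := by
  obtain ⟨hdiff, hLp, hgrad⟩ := hu
  refine ⟨fun x => ((hdiff _).comp x ((differentiable_id.const_smul m) x)).const_mul l, ?_, ?_⟩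
  · simp only [abs_dilate_rpow hl]
    exact (hLp.comp_smul hm.ne').const_mul _
  · simp only [norm_fderiv_dilate_rpow (mul_nonneg hl hm.le)]
    exact (hgrad.comp_smul hm.ne').const_mul _

lemma gradPow_nonneg (p : ℝ) (u : E3 → ℝ) : 0 ≤ gradPow p u :=
  integral_nonneg fun _ => rpow_nonneg (norm_nonneg _) p

end Dilation

lemma exists_mem_Sset_Ifun_eq (a b : ℝ) {p q s ρ μ : ℝ} (hp : 0 < p) (hs : 0 ≤ s) (hρ : 0 < ρ)
    (hμ : 0 < μ) {u : E3 → ℝ} (hu : u ∈ Sset p s) :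
    ∃ w ∈ Sset p (ρ * s), Ifun a b p q w =
      a / p * (ρ * μ) ^ p * gradPow p u + b / (2 * p) * ((ρ * μ) ^ p) ^ 2 * gradPow p u ^ 2
        - 1 / q * (ρ ^ q * μ ^ (3 * (q - p) / p)) * lpPow q u := by
  set l := ρ * μ ^ (3 / p)
  have hl : 0 ≤ l := by positivity
  -- `l` is chosen so that the `L^p` norm scales by `ρ` exactly, whatever `μ` is
  have hfac (r : ℝ) : l ^ r * (μ ^ 3)⁻¹ = ρ ^ r * μ ^ (3 * r / p - 3) := by
    rw [mul_rpow hρ.le (by positivity), ← rpow_mul hμ.le, mul_assoc, ← rpow_natCast μ 3,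
      ← rpow_neg hμ.le, ← rpow_add hμ]
    ring_nf
  have hmass : l ^ p * (μ ^ 3)⁻¹ = ρ ^ p := by
    rw [hfac, mul_div_cancel_right₀ 3 hp.ne', sub_self, rpow_zero, mul_one]
  refine ⟨dilate l μ u, ⟨hu.1.dilate hl hμ, ?_⟩, ?_⟩
  · rw [lpPow_dilate hl hμ.le, hu.2, hmass, mul_rpow hρ.le hs]
  · have hgrad : (l * μ) ^ p * (μ ^ 3)⁻¹ = (ρ * μ) ^ p := by
      rw [mul_rpow hl hμ.le, mul_right_comm, hmass, mul_rpow hρ.le hμ.le]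
    have hexp : 3 * q / p - 3 = 3 * (q - p) / p := by field_simp
    rw [Ifun, gradPow_dilate hl hμ.le, lpPow_dilate hl hμ.le, hgrad, hfac, hexp]
    ring

section Energy

variable {a b p q : ℝ}

lemma exists_mem_Sset_mul_Ifun_le (hb : 0 ≤ b) (hp : 3 / 2 ≤ p) {s θ : ℝ} (hs : 0 ≤ s)
    (hθ : 1 ≤ θ) {u : E3 → ℝ} (hu : u ∈ Sset p s) :
    ∃ w ∈ Sset p (θ * s), Ifun a b p q w ≤
      θ ^ p * Ifun a b p q u - a / p * (θ ^ p - θ ^ (p - p ^ 2 / 3)) * gradPow p u := by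
  have hp0 : 0 < p := by linarith
  have hθ0 : 0 < θ := by linarith
  obtain ⟨w, hw, hIw⟩ := exists_mem_Sset_Ifun_eq a b (q := q) hp0 hs hθ0
    (rpow_pos_of_pos hθ0 (-(p / 3))) hu
  have hgrad : (θ * θ ^ (-(p / 3))) ^ p = θ ^ (p - p ^ 2 / 3) := by
    rw [mul_rpow hθ0.le (by positivity), ← rpow_mul hθ0.le, ← rpow_add hθ0]
    ring_nf
  have hLq : θ ^ q * (θ ^ (-(p / 3))) ^ (3 * (q - p) / p) = θ ^ p := by
    rw [← rpow_mul hθ0.le, ← rpow_add hθ0]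
    field_simp
    ring_nf
  have hsq : (θ ^ (p - p ^ 2 / 3)) ^ 2 ≤ θ ^ p := by
    rw [← rpow_natCast, ← rpow_mul hθ0.le]
    exact rpow_le_rpow_of_exponent_le hθ (by push_cast; nlinarith)
  refine ⟨w, hw, ?_⟩
  rw [hIw, hgrad, hLq, Ifun]
  have := mul_le_mul_of_nonneg_left hsq
    (mul_nonneg (div_nonneg hb (by positivity : (0:ℝ) ≤ 2 * p)) (sq_nonneg (gradPow p u)))
  linarith

-- `sInf` of an empty or unbounded below set of reals is `0`.
lemma Ifun_image_Sset_nonempty_bddBelow {c : ℝ} (h : ifun a b p q c ≠ 0) :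
    (Ifun a b p q '' Sset p c).Nonempty ∧ BddBelow (Ifun a b p q '' Sset p c) := by
  refine ⟨Set.nonempty_iff_ne_empty.mpr fun he => h ?_, not_not.mp fun hb => h ?_⟩
  · rw [ifun, he, Real.sInf_empty]
  · rw [ifun, Real.sInf_of_not_bddBelow hb]

-- Rescaling to mass `c` bounds the `L^q` term of `u ∈ S(s)` by its gradient terms; the dilation
-- can be chosen so that only half of the quartic gradient term is used up, since `q < p + 2p²/3`.
lemma bddBelow_Ifun_image_Sset (hb : 0 < b) (hp : 0 < p) (hq : q < p + 2 * p ^ 2 / 3) {c s : ℝ}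
    (hc : 0 < c) (hs : 0 < s) (hbdd : BddBelow (Ifun a b p q '' Sset p c)) :
    BddBelow (Ifun a b p q '' Sset p s) := by
  set σ := 3 * (q - p) / p
  have hσ : 0 < 2 * p - σ := by
    rw [sub_pos, div_lt_iff₀ hp]
    nlinarith
  set ρ := c / s
  have hρ : 0 < ρ := div_pos hc hs
  obtain ⟨μ, hμ, hbal⟩ : ∃ μ > 0, 2 * ((ρ * μ) ^ p) ^ 2 = ρ ^ q * μ ^ σ := by
    refine ⟨(ρ ^ (q - 2 * p) / 2) ^ (1 / (2 * p - σ)), by positivity, ?_⟩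
    set μ := (ρ ^ (q - 2 * p) / 2) ^ (1 / (2 * p - σ))
    have hμ : μ ^ (2 * p - σ) = ρ ^ (q - 2 * p) / 2 := by
      rw [← rpow_mul (by positivity), one_div_mul_cancel hσ.ne', rpow_one]
    have hsplit : ((ρ * μ) ^ p) ^ 2 = ρ ^ (2 * p) * (μ ^ (2 * p - σ) * μ ^ σ) := by
      rw [← rpow_add (by positivity), sub_add_cancel, ← mul_rpow hρ.le (by positivity),
        ← rpow_natCast, ← rpow_mul (by positivity)]
      ring_nf
    rw [hsplit, hμ, show 2 * (ρ ^ (2 * p) * (ρ ^ (q - 2 * p) / 2 * μ ^ σ))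
      = ρ ^ (2 * p) * ρ ^ (q - 2 * p) * μ ^ σ by ring, ← rpow_add hρ, add_sub_cancel]
  set g := (ρ * μ) ^ p
  set κ := ρ ^ q * μ ^ σ
  have hκ : 0 < κ := by positivity
  obtain ⟨I₀, hI₀⟩ := hbdd
  refine ⟨I₀ / κ - (a / p * (1 - g / κ)) ^ 2 / (4 * (b / (4 * p))), ?_⟩
  rintro _ ⟨u, hu, rfl⟩
  obtain ⟨w, hw, hIw⟩ := exists_mem_Sset_Ifun_eq a b (q := q) hp hs.le hρ hμ hu
  rw [div_mul_cancel₀ c hs.ne'] at hw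
  have hLq : 1 / q * lpPow q u ≤
      (a / p * g * gradPow p u + b / (2 * p) * g ^ 2 * gradPow p u ^ 2 - I₀) / κ := by
    rw [le_div_iff₀ hκ]
    linarith [hI₀ ⟨w, hw, rfl⟩]
  have hquad := neg_sq_div_le_mul_add_mul_sq (by positivity : 0 < b / (4 * p))
    (a / p * (1 - g / κ)) (gradPow p u)
  have hκg : g ^ 2 / κ = 1 / 2 := by
    rw [div_eq_iff hκ.ne']
    linarith
  have hsplit : (a / p * g * gradPow p u + b / (2 * p) * g ^ 2 * gradPow p u ^ 2 - I₀) / κ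
      = a / p * (g / κ) * gradPow p u + b / (2 * p) * (g ^ 2 / κ) * gradPow p u ^ 2 - I₀ / κ := by
    ring
  rw [hsplit, hκg] at hLq
  rw [Ifun]
  linear_combination hLq + hquad

-- Near-minimisers cannot have small gradient: the mass-preserving dilation with `μ ^ σ = 4`
-- would otherwise push the energy below `ifun s`.
lemma exists_pos_le_gradPow (ha : 0 ≤ a) (hb : 0 ≤ b) (hp : 0 < p) (hq : p < q) {s : ℝ}
    (hs : 0 ≤ s) (hbdd : BddBelow (Ifun a b p q '' Sset p s)) (hneg : ifun a b p q s < 0) :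
    ∃ g₀ > 0, ∀ u ∈ Sset p s, Ifun a b p q u ≤ ifun a b p q s / 2 → g₀ ≤ gradPow p u := by
  set σ := 3 * (q - p) / p
  have hσ : 0 < σ := div_pos (by linarith) hp
  set μ := (4 : ℝ) ^ (1 / σ)
  have hμ : 0 < μ := by positivity
  have hμσ : μ ^ σ = 4 := by
    rw [← rpow_mul (by norm_num), one_div_mul_cancel hσ.ne', rpow_one]
  set D₁ := a / p * μ ^ p
  set D₂ := b / (2 * p) * (μ ^ p) ^ 2
  have hD₁ : 0 ≤ D₁ := by positivity
  have hD₂ : 0 ≤ D₂ := by positivity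
  refine ⟨min 1 (-ifun a b p q s / (D₁ + D₂ + 1)),
    lt_min one_pos (div_pos (neg_pos.mpr hneg) (by positivity)), ?_⟩
  intro u hu hIu
  obtain ⟨w, hw, hIw⟩ := exists_mem_Sset_Ifun_eq a b (q := q) hp hs one_pos hμ hu
  rw [one_mul] at hw
  simp only [one_mul, one_rpow] at hIw
  have hinf : ifun a b p q s ≤ Ifun a b p q w := csInf_le hbdd ⟨w, hw, rfl⟩
  rw [hIw, hμσ] at hinf
  rw [Ifun] at hIu
  have hG := gradPow_nonneg p u
  apply min_le_of_le_mul_add_mul_sq hD₁ hD₂ hG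
  linarith [mul_nonneg (div_nonneg ha hp.le) hG,
    mul_nonneg (div_nonneg hb (by positivity : (0 : ℝ) ≤ 2 * p)) (sq_nonneg (gradPow p u))]

lemma ifun_mul_lt (ha : 0 < a) (hb : 0 < b) (hp : 3 / 2 ≤ p) (hq₁ : p < q)
    (hq₂ : q < p + 2 * p ^ 2 / 3) {s θ : ℝ} (hs : 0 < s) (hneg : ifun a b p q s < 0)
    (hθ : 1 < θ) : ifun a b p q (θ * s) < θ ^ p * ifun a b p q s := by
  have hp0 : 0 < p := by linarith
  have hθ0 : 0 < θ := by linarith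
  obtain ⟨hne, hbdd⟩ := Ifun_image_Sset_nonempty_bddBelow hneg.ne
  have hbddθ := bddBelow_Ifun_image_Sset hb hp0 hq₂ hs (mul_pos hθ0 hs) hbdd
  obtain ⟨g₀, hg₀, hgrad⟩ := exists_pos_le_gradPow ha.le hb.le hp0 hq₁ hs.le hbdd hneg
  set δ := a / p * (θ ^ p - θ ^ (p - p ^ 2 / 3)) * g₀
  have hgap : 0 < θ ^ p - θ ^ (p - p ^ 2 / 3) :=
    sub_pos.mpr (rpow_lt_rpow_of_exponent_lt hθ (by nlinarith))
  have hδ : 0 < δ := by positivity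
  have hθp : 0 < θ ^ p := by positivity
  obtain ⟨_, ⟨u, hu, rfl⟩, hu_lt⟩ := exists_lt_of_csInf_lt hne
    (lt_min (by linarith) (lt_add_of_pos_right _ (div_pos hδ hθp)) :
      ifun a b p q s < min (ifun a b p q s / 2) (ifun a b p q s + δ / θ ^ p))
  rw [lt_min_iff] at hu_lt
  obtain ⟨w, hw, hIw⟩ := exists_mem_Sset_mul_Ifun_le (q := q) hb.le hp hs.le hθ.le hu
  have hδu : δ ≤ a / p * (θ ^ p - θ ^ (p - p ^ 2 / 3)) * gradPow p u :=
    mul_le_mul_of_nonneg_left (hgrad u hu hu_lt.1.le) (by positivity)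
  have hnear : θ ^ p * Ifun a b p q u < θ ^ p * ifun a b p q s + δ := by
    have := mul_lt_mul_of_pos_left hu_lt.2 hθp
    rwa [mul_add, mul_div_cancel₀ _ hθp.ne'] at this
  calc ifun a b p q (θ * s) ≤ Ifun a b p q w := csInf_le hbddθ ⟨w, hw, rfl⟩
    _ ≤ θ ^ p * Ifun a b p q u - δ := hIw.trans (sub_le_sub_left hδu _)
    _ < θ ^ p * ifun a b p q s := sub_lt_iff_lt_add.mpr hnear

lemma rpow_mul_ifun_lt (ha : 0 < a) (hb : 0 < b) (hp : 3 / 2 ≤ p) (hq₁ : p < q)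
    (hq₂ : q < p + 2 * p ^ 2 / 3) {c s : ℝ} (hs : 0 < s) (hsc : s < c)
    (hneg : ifun a b p q c < 0) : s ^ p * ifun a b p q c < c ^ p * ifun a b p q s := by
  have hsp : 0 < s ^ p := by positivity
  rcases lt_or_ge (ifun a b p q s) 0 with hs_neg | hs_nonneg
  · have h := ifun_mul_lt ha hb hp hq₁ hq₂ hs hs_neg ((one_lt_div hs).mpr hsc)
    rw [div_mul_cancel₀ c hs.ne', div_rpow (hs.le.trans hsc.le) hs.le] at h
    calc s ^ p * ifun a b p q c < s ^ p * (c ^ p / s ^ p * ifun a b p q s) :=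
          mul_lt_mul_of_pos_left h hsp
      _ = c ^ p * ifun a b p q s := by field_simp
  · exact (mul_neg_of_pos_of_neg hsp hneg).trans_le
      (mul_nonneg (rpow_nonneg (hs.le.trans hsc.le) p) hs_nonneg)

end Energy

theorem stmt10_general (a b p q c : ℝ) (ha : 0 < a) (hb : 0 < b) (hc : 0 < c)
    (hp1 : 3/2 < p) (hq1 : p < q) (hq2 : q < p + 2*p^2/3)
    (hneg : ifun a b p q c < 0) :
    (∀ θ : ℝ, 1 < θ → ifun a b p q (θ*c) < θ^p * ifun a b p q c) ∧
    (∀ α : ℝ, 0 < α → α < c →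
      ifun a b p q c < ifun a b p q α + ifun a b p q ((c^p - α^p) ^ (1/p))) := by
  refine ⟨fun θ hθ => ifun_mul_lt ha hb hp1.le hq1 hq2 hc hneg hθ, fun α hα hαc => ?_⟩
  have hp : 0 < p := by linarith
  set β := (c ^ p - α ^ p) ^ (1 / p)
  have hαp : 0 < α ^ p := rpow_pos_of_pos hα p
  have hαc' : α ^ p < c ^ p := rpow_lt_rpow hα.le hαc hp
  have hβ : 0 < β := rpow_pos_of_pos (sub_pos.mpr hαc') _
  have hβp : β ^ p = c ^ p - α ^ p := by
    rw [← rpow_mul (sub_pos.mpr hαc').le, one_div_mul_cancel hp.ne', rpow_one]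
  have hβc : β < c := (rpow_lt_rpow_iff hβ.le hc.le hp).mp (by linarith)
  have hα_lt := rpow_mul_ifun_lt ha hb hp1.le hq1 hq2 hα hαc hneg
  have hβ_lt := rpow_mul_ifun_lt ha hb hp1.le hq1 hq2 hβ hβc hneg
  rw [hβp] at hβ_lt
  exact lt_of_mul_lt_mul_left (by linarith) (rpow_nonneg hc.le p)

theorem stmt10 (a b p q c : ℝ) (ha : 0 < a) (hb : 0 < b) (hc : 0 < c)
    (hp1 : 3/2 < p) (hp2 : p < 3) (hq1 : p < q) (hq2 : q < p + 2*p^2/3)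
    (hneg : ifun a b p q c < 0) :
    (∀ θ : ℝ, 1 < θ → ifun a b p q (θ*c) < θ^p * ifun a b p q c) ∧
    (∀ α : ℝ, 0 < α → α < c →
      ifun a b p q c < ifun a b p q α + ifun a b p q ((c^p - α^p) ^ (1/p))) :=
  stmt10_general a b p q c ha hb hc hp1 hq1 hq2 hneg
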